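/- arXiv:0807.2987 — 2 statements merged into one kernel-verified Lean document; each statement's English description precedes it below -/
import Mathlib

section
/- For every configuration ω ∈ Ω and every site z ∈ ℤ₊², the set Γ_z of up-right paths from (0,0) to z contains a unique ω-optimal path that is below every ω-optimal path of Γ_z (the low-optimal path, denoted γ_z^ω). -/
open scoped NNReal

/-- A site of the lattice `ℤ²`. -/
abbrev Site : Type := ℤ × ℤ

/-- The positive quadrant `ℤ₊²`. -/
def posQuad : Set Site := {z : Site | 0 ≤ z.1 ∧ 0 ≤ z.2}

/-- An admissible (up-right) step. -/
def IsStep (u v : Site) : Prop := v = u + (1, 0) ∨ v = u + (0, 1)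

/-- `γ` is an up-right path from `(0,0)` to `z`, i.e. `γ ∈ Γ_z`. -/
def IsPathTo (z : Site) (γ : List Site) : Prop :=
  γ.head? = some ((0, 0) : Site) ∧ γ.getLast? = some z ∧ γ.Chain' IsStep

/-- The length `ω(γ) = Σ_{z ∈ γ} ω(z)` of a path `γ` under the configuration `ω`. -/
noncomputable def plen (ω : Site → ℝ) (γ : List Site) : ℝ := (γ.map ω).sum

/-- `γ ∈ Γ_z` is `ω`-optimal if its length is maximal over `Γ_z`. -/
def IsOptimal (ω : Site → ℝ) (z : Site) (γ : List Site) : Prop :=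
  IsPathTo z γ ∧ ∀ γ' : List Site, IsPathTo z γ' → plen ω γ' ≤ plen ω γ

/-- `γ` is below `γ'`: at every step index, the second coordinate of the site of `γ`
is at most that of the corresponding site of `γ'`. -/
def Below (γ γ' : List Site) : Prop :=
  ∀ (i : ℕ) (h : i < γ.length) (h' : i < γ'.length),
    (γ.get ⟨i, h⟩).2 ≤ (γ'.get ⟨i, h'⟩).2

/-- `γ` is the low-optimal path of `Γ_z`: it is `ω`-optimal and below every
`ω`-optimal path of `Γ_z`. -/
def IsLowOptimal (ω : Site → ℝ) (z : Site) (γ : List Site) : Prop :=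
  IsOptimal ω z γ ∧ ∀ γ' : List Site, IsOptimal ω z γ' → Below γ γ'

open Classical in
/-- The low-optimal path `γ_z^ω` (an arbitrary default when it does not exist). -/
noncomputable def lowOpt (ω : Site → ℝ) (z : Site) : List Site :=
  if h : ∃ γ : List Site, IsLowOptimal ω z γ then h.choose else []

/-- The vertex set `V(T_z^ω) = {z' ∈ ℤ₊² : z ∈ γ_{z'}^ω}` of the subtree rooted at `z`. -/
def treeV (ω : Site → ℝ) (z : Site) : Set Site :=
  {z' : Site | z' ∈ posQuad ∧ z ∈ lowOpt ω z'}

/-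
All paths of `Γ_z` have `z.1 + z.2 + 1` sites, the `i`-th one on the antidiagonal
`x + y = i`. Hence the sitewise lower and upper envelopes `pathMeet γ γ'` and `pathJoin γ γ'` of two
paths of `Γ_z` are again paths of `Γ_z`, and their lengths add up to `ω(γ) + ω(γ')`. So the meet of
two optimal paths is optimal, since the join cannot beat the optimum. Among the finitely many
optimal paths take one whose height profile is minimal: its meet with any optimal path is optimal
and no higher, so it is below every optimal path. A path is determined by its height profile,
which gives uniqueness.
-/

lemma Set.Finite.setOf_length_eq_forall_mem {α : Type*} {s : Set α} (hs : s.Finite) (n : ℕ) :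
    {l : List α | l.length = n ∧ ∀ x ∈ l, x ∈ s}.Finite := by
  have := hs.to_subtype
  refine ((List.finite_length_eq s n).image (List.map (↑))).subset ?_
  rintro l ⟨rfl, hl⟩
  lift l to List s using hl
  exact ⟨l, by simp, rfl⟩

namespace IsStep

variable {u v : Site}

lemma le (h : IsStep u v) : u ≤ v := by
  rcases h with rfl | rfl <;> simp [Prod.le_def]

lemma fst_add_snd (h : IsStep u v) : v.1 + v.2 = u.1 + u.2 + 1 := by
  rcases h with rfl | rfl <;> simp only [Prod.fst_add, Prod.snd_add] <;> ring

end IsStep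

def lowerSite (u v : Site) : Site := if u.2 ≤ v.2 then u else v

def upperSite (u v : Site) : Site := if u.2 ≤ v.2 then v else u

lemma snd_lowerSite (u v : Site) : (lowerSite u v).2 = min u.2 v.2 := by
  unfold lowerSite
  split_ifs <;> omega

lemma isStep_lowerSite {u u' v v' : Site} (hu : IsStep u u') (hv : IsStep v v')
    (huv : u.1 + u.2 = v.1 + v.2) : IsStep (lowerSite u v) (lowerSite u' v') := by
  simp only [IsStep, lowerSite, Prod.ext_iff, Prod.fst_add, Prod.snd_add] at *
  split_ifs <;> omega

lemma isStep_upperSite {u u' v v' : Site} (hu : IsStep u u') (hv : IsStep v v')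
    (huv : u.1 + u.2 = v.1 + v.2) : IsStep (upperSite u v) (upperSite u' v') := by
  simp only [IsStep, upperSite, Prod.ext_iff, Prod.fst_add, Prod.snd_add] at *
  split_ifs <;> omega

def pathMeet (γ γ' : List Site) : List Site := List.zipWith lowerSite γ γ'

def pathJoin (γ γ' : List Site) : List Site := List.zipWith upperSite γ γ'

namespace IsPathTo

variable {z : Site} {γ γ' : List Site}

lemma ne_nil (h : IsPathTo z γ) : γ ≠ [] := by
  rintro rfl
  simp [IsPathTo] at h

lemma head_eq (h : IsPathTo z γ) : γ.head h.ne_nil = (0, 0) :=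
  Option.some_injective _ (by rw [← List.head?_eq_some_head]; exact h.1)

lemma getLast_eq (h : IsPathTo z γ) : γ.getLast h.ne_nil = z :=
  Option.some_injective _ (by rw [← List.getLast?_eq_some_getLast]; exact h.2.1)

lemma isStep_getElem (h : IsPathTo z γ) (i : ℕ) (hi : i + 1 < γ.length) :
    IsStep γ[i] γ[i + 1] :=
  List.isChain_iff_getElem.1 h.2.2 i hi

lemma fst_add_snd_getElem (h : IsPathTo z γ) :
    ∀ (i : ℕ) (hi : i < γ.length), γ[i].1 + γ[i].2 = i
  | 0, hi => by
    rw [List.getElem_zero, h.head_eq]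
    rfl
  | i + 1, hi => by
    rw [(h.isStep_getElem i hi).fst_add_snd, h.fst_add_snd_getElem i (by omega)]
    push_cast
    rfl

lemma length_eq (h : IsPathTo z γ) : (γ.length : ℤ) = z.1 + z.2 + 1 := by
  have hpos := List.length_pos_iff.2 h.ne_nil
  have hlast := h.fst_add_snd_getElem (γ.length - 1) (by omega)
  rw [← List.getLast_eq_getElem h.ne_nil, h.getLast_eq] at hlast
  omega

lemma length_eq_length (h : IsPathTo z γ) (h' : IsPathTo z γ') : γ.length = γ'.length := by
  have := h.length_eq
  have := h'.length_eq
  omega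

lemma mem_Icc (h : IsPathTo z γ) {u : Site} (hu : u ∈ γ) : u ∈ Set.Icc (0, 0) z := by
  have hle : γ.Pairwise (· ≤ ·) :=
    List.isChain_iff_pairwise.1 (h.2.2.imp fun _ _ => IsStep.le)
  exact ⟨h.head_eq ▸ hle.rel_head hu, h.getLast_eq ▸ hle.rel_getLast hu⟩

lemma append_singleton {w : Site} (h : IsPathTo w γ) (hz : IsStep w z) :
    IsPathTo z (γ ++ [z]) := by
  refine ⟨by rw [List.head?_append_of_ne_nil _ h.ne_nil]; exact h.1, by simp, ?_⟩
  exact h.2.2.append (List.isChain_singleton z) fun x hx y hy => by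
    rw [h.2.1, Option.mem_some_iff] at hx
    simp_all

lemma zipWith {f : Site → Site → Site}
    (hf_diag : ∀ u, f u u = u)
    (hf_step : ∀ {u u' v v' : Site}, IsStep u u' → IsStep v v' → u.1 + u.2 = v.1 + v.2 →
      IsStep (f u v) (f u' v'))
    (h : IsPathTo z γ) (h' : IsPathTo z γ') : IsPathTo z (List.zipWith f γ γ') := by
  have hl := h.length_eq_length h'
  have hlast := h.2.1
  have hlast' := h'.2.1
  rw [List.getLast?_eq_getElem?, hl] at hlast
  rw [List.getLast?_eq_getElem?] at hlast'
  refine ⟨?_, ?_, List.isChain_iff_getElem.2 fun i hi => ?_⟩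
  · simp [List.head?_zipWith, h.1, h'.1, hf_diag]
  · rw [List.getLast?_eq_getElem?]
    simp [List.getElem?_zipWith, hl, hlast, hlast', hf_diag]
  · simp only [List.length_zipWith] at hi
    simp only [List.getElem_zipWith]
    exact hf_step (h.isStep_getElem i (by omega)) (h'.isStep_getElem i (by omega))
      (by rw [h.fst_add_snd_getElem, h'.fst_add_snd_getElem])

lemma pathMeet (h : IsPathTo z γ) (h' : IsPathTo z γ') :
    IsPathTo z (_root_.pathMeet γ γ') :=
  h.zipWith (fun _ => if_pos le_rfl) isStep_lowerSite h'

lemma pathJoin (h : IsPathTo z γ) (h' : IsPathTo z γ') :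
    IsPathTo z (_root_.pathJoin γ γ') :=
  h.zipWith (fun _ => if_pos le_rfl) isStep_upperSite h'

end IsPathTo

lemma exists_isPathTo {z : Site} (hz : z ∈ posQuad) : ∃ γ, IsPathTo z γ := by
  obtain ⟨z₁, z₂⟩ := z
  obtain ⟨a, rfl⟩ := Int.eq_ofNat_of_zero_le hz.1
  obtain ⟨b, rfl⟩ := Int.eq_ofNat_of_zero_le hz.2
  clear hz
  induction b with
  | zero =>
    induction a with
    | zero => exact ⟨[(0, 0)], rfl, rfl, List.isChain_singleton _⟩
    | succ a ih =>
      obtain ⟨γ, hγ⟩ := ih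
      exact ⟨_, hγ.append_singleton (Or.inl (by simp))⟩
  | succ b ih =>
    obtain ⟨γ, hγ⟩ := ih
    exact ⟨_, hγ.append_singleton (Or.inr (by simp))⟩

lemma finite_setOf_isPathTo (z : Site) : {γ | IsPathTo z γ}.Finite :=
  ((Set.finite_Icc (0, 0) z).setOf_length_eq_forall_mem (z.1 + z.2 + 1).toNat).subset
    fun γ h => ⟨by have := h.length_eq; omega, fun _ => h.mem_Icc⟩

lemma plen_pathMeet_add_plen_pathJoin (ω : Site → ℝ) :
    ∀ {γ γ' : List Site}, γ.length = γ'.length →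
      plen ω (pathMeet γ γ') + plen ω (pathJoin γ γ') = plen ω γ + plen ω γ'
  | [], [], _ => by simp [pathMeet, pathJoin, plen]
  | u :: γ, v :: γ', hl => by
    have ih := plen_pathMeet_add_plen_pathJoin ω (γ := γ) (γ' := γ') (by simpa using hl)
    simp only [pathMeet, pathJoin, plen, List.zipWith_cons_cons, List.map_cons,
      List.sum_cons] at ih ⊢
    unfold lowerSite upperSite at ih ⊢
    split_ifs <;> linarith

lemma IsOptimal.pathMeet {ω : Site → ℝ} {z : Site} {γ γ' : List Site}
    (h : IsOptimal ω z γ) (h' : IsOptimal ω z γ') : IsOptimal ω z (pathMeet γ γ') := by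
  have hjoin : plen ω (pathJoin γ γ') ≤ plen ω γ := h.2 _ (h.1.pathJoin h'.1)
  have hsum := plen_pathMeet_add_plen_pathJoin ω (h.1.length_eq_length h'.1)
  refine ⟨h.1.pathMeet h'.1, fun δ hδ => ?_⟩
  linarith [h.2 δ hδ, h'.2 γ h.1]

def heights (γ : List Site) (i : ℕ) : ℤ := (γ.getD i 0).2

lemma below_iff_heights_le {γ γ' : List Site} (hl : γ.length = γ'.length) :
    Below γ γ' ↔ heights γ ≤ heights γ' := by
  refine ⟨fun h i => ?_, fun h i hi hi' => by simpa [heights, hi, hi'] using h i⟩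
  by_cases hi : i < γ.length
  · simpa [heights, hi, hl ▸ hi] using h i hi (hl ▸ hi)
  · simp [heights, not_lt.1 hi, hl ▸ not_lt.1 hi]

lemma heights_pathMeet {γ γ' : List Site} (hl : γ.length = γ'.length) :
    heights (pathMeet γ γ') = heights γ ⊓ heights γ' := by
  ext i
  by_cases hi : i < γ.length
  · simp [heights, pathMeet, hi, hl ▸ hi, snd_lowerSite]
  · simp [heights, pathMeet, not_lt.1 hi, hl ▸ not_lt.1 hi]

lemma IsPathTo.eq_of_below_of_below {z : Site} {γ γ' : List Site} (h : IsPathTo z γ)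
    (h' : IsPathTo z γ') (hγγ' : Below γ γ') (hγ'γ : Below γ' γ) : γ = γ' := by
  have hl := h.length_eq_length h'
  have hh : heights γ = heights γ' :=
    le_antisymm ((below_iff_heights_le hl).1 hγγ') ((below_iff_heights_le hl.symm).1 hγ'γ)
  refine List.ext_getElem hl fun i hi hi' => ?_
  have hsnd := congrFun hh i
  simp only [heights, List.getD_eq_getElem _ _ hi, List.getD_eq_getElem _ _ hi'] at hsnd
  have := h.fst_add_snd_getElem i hi
  have := h'.fst_add_snd_getElem i hi'
  ext <;> omega

lemma exists_isOptimal (ω : Site → ℝ) {z : Site} (hz : z ∈ posQuad) :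
    ∃ γ, IsOptimal ω z γ := by
  obtain ⟨γ, hγ, hmax⟩ := (finite_setOf_isPathTo z).exists_maximalFor (plen ω) _
    (exists_isPathTo hz)
  exact ⟨γ, hγ, fun γ' hγ' => (le_total (plen ω γ') (plen ω γ)).elim id (hmax hγ')⟩

lemma MinimalFor.below_of_isOptimal {ω : Site → ℝ} {z : Site} {γ₀ γ : List Site}
    (h₀ : MinimalFor (IsOptimal ω z) heights γ₀) (hγ : IsOptimal ω z γ) : Below γ₀ γ := by
  have hl := h₀.1.1.length_eq_length hγ.1
  have hmeet := h₀.2 (h₀.1.pathMeet hγ) (heights_pathMeet hl ▸ inf_le_left)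
  rw [heights_pathMeet hl] at hmeet
  exact (below_iff_heights_le hl).2 (le_inf_iff.1 hmeet).2

theorem low_optimal_exists_unique_general (ω : Site → ℝ)
    (z : Site) (hz : z ∈ posQuad) :
    ∃! γ : List Site, IsLowOptimal ω z γ := by
  obtain ⟨γ₀, hγ₀⟩ := ((finite_setOf_isPathTo z).subset fun _ h => h.1).exists_minimalFor
    heights {γ | IsOptimal ω z γ} (exists_isOptimal ω hz)
  have hlow : ∀ γ, IsOptimal ω z γ → Below γ₀ γ := fun _ => hγ₀.below_of_isOptimal
  exact ⟨γ₀, ⟨hγ₀.1, hlow⟩, fun γ hγ => hγ.1.1.eq_of_below_of_below hγ₀.1.1 (hγ.2 γ₀ hγ₀.1)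
    (hlow γ hγ.1)⟩

/-- Each `Γ_z`, `z ∈ ℤ₊²`, contains a unique `ω`-optimal path below every
`ω`-optimal path of `Γ_z`. -/
theorem low_optimal_exists_unique (ω : Site → ℝ) (hω : ∀ z : Site, 0 ≤ ω z)
    (z : Site) (hz : z ∈ posQuad) :
    ∃! γ : List Site, IsLowOptimal ω z γ :=
  low_optimal_exists_unique_general ω z hz
end

section
/- Let ℙ be a translation-invariant Borel probability measure on Ω, let a ∈ ℤ₊², and let A ⊆ 𝕋 satisfy the growth property, with {ω : T_z^ω ∈ A} measurable for every z ∈ ℤ₊². Set Ω^a = {ω ∈ Ω : a belongs to both γ_{a+(1,0)}^ω and γ_{a+(0,1)}^ω}. Then ℙ(T_{a+(1,1)} ∈ A and Ω^a) ≤ ℙ(T_{(1,1)} ∈ A and τ_a(Ω^a)). -/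
open scoped NNReal

/-- A (rooted) subtree of the last passage percolation tree, recorded by its root
and its vertex set. -/
structure LPPTree where
  root : Site
  verts : Set Site

/-- The subtree `T_z^ω` of the last passage percolation tree rooted at `z`. -/
def subtree (ω : Site → ℝ) (z : Site) : LPPTree := ⟨z, treeV ω z⟩

/-- The set `𝕋` of all subtrees `T_z^ω`, `z ∈ ℤ₊²`, `ω ∈ Ω`. -/
def TreeSet : Set LPPTree :=
  {T : LPPTree | ∃ (ω : Site → ℝ) (z : Site),
    (∀ s : Site, 0 ≤ ω s) ∧ z ∈ posQuad ∧ T = subtree ω z}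

/-- A set `A ⊆ 𝕋` satisfies the growth property if whenever `T ∈ A`, `T' ∈ 𝕋` and
`V(T) - r(T) ⊆ V(T') - r(T')`, then `T' ∈ A`. -/
def GrowthProperty (A : Set LPPTree) : Prop :=
  ∀ T ∈ A, ∀ T' ∈ TreeSet,
    (· - T.root) '' T.verts ⊆ (· - T'.root) '' T'.verts → T' ∈ A

/-- A point of the configuration space `Ω = [0,∞)^{ℤ²}`. -/
abbrev CfgNN : Type := Site → ℝ≥0

/-- The real-valued configuration associated to a point of `Ω`. -/
noncomputable def toCfg (ω : CfgNN) : Site → ℝ := fun z => (ω z : ℝ)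

/-- The translation operator `τ_a(ω) = ω(a + ·)` on `Ω`. -/
def shift (a : Site) (ω : CfgNN) : CfgNN := fun z => ω (a + z)

/-- The event `Ω^a = {ω ∈ Ω : a belongs to both γ_{a+(1,0)}^ω and γ_{a+(0,1)}^ω}`. -/
def OmegaSup (a : Site) : Set CfgNN :=
  {ω : CfgNN | a ∈ lowOpt (toCfg ω) (a + (1, 0)) ∧ a ∈ lowOpt (toCfg ω) (a + (0, 1))}

/-!
On `Ω^a` the low-optimal paths to `a + (1,0)` and to `a + (0,1)` both pass through `a`. A
low-optimal path through `a + (1,1)` enters it from one of these two sites, and since a prefix of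
a low-optimal path is low-optimal, it passes through `a` as well. Its part after `a`, translated
by `-a`, is low-optimal for `τ_a ω`, so it passes through `(1,1)`. Hence
`V(T_{a+(1,1)}^ω) - (a+(1,1)) ⊆ V(T_{(1,1)}^{τ_a ω}) - (1,1)`, the growth property gives
`{T_{a+(1,1)} ∈ A} ∩ Ω^a ⊆ τ_a⁻¹ ({T_{(1,1)} ∈ A} ∩ τ_a Ω^a)`, and translation invariance of `ℙ`
concludes.
-/

open MeasureTheory

theorem IsStep.sum_eq {u v : Site} (h : IsStep u v) : v.1 + v.2 = u.1 + u.2 + 1 := by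
  rcases h with rfl | rfl <;> simp only [Prod.fst_add, Prod.snd_add] <;> ring

theorem IsStep.le_s3 {u v : Site} (h : IsStep u v) : u ≤ v := by
  rcases h with rfl | rfl <;> simp [Prod.le_def]

theorem IsStep.lt {u v : Site} (h : IsStep u v) : u < v := by
  rcases h with rfl | rfl <;> simp [Prod.lt_iff]

theorem IsStep.add {u v : Site} (c : Site) (h : IsStep u v) : IsStep (u + c) (v + c) := by
  rcases h with rfl | rfl <;> [left; right] <;> abel

theorem IsStep.eq_of_snd_eq {u v v' : Site} (h : IsStep u v) (h' : IsStep u v')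
    (h₂ : v.2 = v'.2) : v = v' := by
  rcases h with rfl | rfl <;> rcases h' with rfl | rfl <;> simp_all

section Below

variable {x y : Site} {l l' p p' q q' : List Site}

@[simp]
theorem below_nil_left : Below [] l := fun _ h => absurd h (Nat.not_lt_zero _)

@[simp]
theorem below_nil_right : Below l [] := fun _ _ h => absurd h (Nat.not_lt_zero _)

theorem below_cons_cons : Below (x :: l) (y :: l') ↔ x.2 ≤ y.2 ∧ Below l l' := by
  refine ⟨fun h => ⟨h 0 (by simp) (by simp), fun i hi hi' => ?_⟩, fun ⟨h₀, h⟩ i hi hi' => ?_⟩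
  · simpa using h (i + 1) (by simpa using hi) (by simpa using hi')
  · cases i with
    | zero => simpa using h₀
    | succ i => simpa using h i (by simpa using hi) (by simpa using hi')

theorem below_append (hlen : p.length = p'.length) :
    Below (p ++ q) (p' ++ q') ↔ Below p p' ∧ Below q q' := by
  induction p generalizing p' with
  | nil => obtain rfl := List.length_eq_zero_iff.mp hlen.symm; simp
  | cons x p ih =>
    obtain ⟨y, p', rfl⟩ := List.exists_cons_of_length_eq_add_one hlen.symm
    simp [below_cons_cons, ih (Nat.succ_injective hlen), and_assoc]

theorem below_map_add (c : Site) : Below (l.map (· + c)) (l'.map (· + c)) ↔ Below l l' := by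
  induction l generalizing l' with
  | nil => simp
  | cons x l ih => cases l' <;> simp [below_cons_cons, ih]

end Below

inductive IsPath : Site → Site → List Site → Prop
  | single (z : Site) : IsPath z z [z]
  | cons {u v z : Site} {γ : List Site} : IsStep u v → IsPath v z γ → IsPath u z (u :: γ)

namespace IsPath

variable {u w x z : Site} {γ p s : List Site}

theorem exists_eq_cons (h : IsPath u z γ) : ∃ t, γ = u :: t := by
  cases h <;> exact ⟨_, rfl⟩

theorem head? (h : IsPath u z γ) : γ.head? = some u := by
  obtain ⟨t, rfl⟩ := h.exists_eq_cons; rfl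

theorem getLast? (h : IsPath u z γ) : γ.getLast? = some z := by
  induction h with
  | single => rfl
  | cons _ h ih => obtain ⟨t, rfl⟩ := h.exists_eq_cons; rw [List.getLast?_cons_cons, ih]

theorem isChain (h : IsPath u z γ) : γ.IsChain IsStep := by
  induction h with
  | single => exact .singleton _
  | cons hst h ih => obtain ⟨t, rfl⟩ := h.exists_eq_cons; exact .cons_cons hst ih

theorem of_isChain (hhead : γ.head? = some u) (hlast : γ.getLast? = some z)
    (hchain : γ.IsChain IsStep) : IsPath u z γ := by
  induction γ generalizing u with
  | nil => simp at hhead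
  | cons y t ih =>
    obtain rfl : y = u := by simpa using hhead
    cases t with
    | nil =>
      obtain rfl : y = z := by simpa using hlast
      exact single y
    | cons v t =>
      rw [List.getLast?_cons_cons] at hlast
      obtain ⟨hst, hchain⟩ := List.isChain_cons_cons.mp hchain
      exact cons hst (ih rfl hlast hchain)

theorem length_eq (h : IsPath u z γ) : (γ.length : ℤ) = z.1 + z.2 - (u.1 + u.2) + 1 := by
  induction h with
  | single => simp
  | cons hst _ ih => simp only [List.length_cons, Nat.cast_succ, ih]; linarith [hst.sum_eq]

theorem le_s3 (h : IsPath u z γ) : u ≤ z := by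
  induction h with
  | single => exact le_rfl
  | cons hst _ ih => exact hst.le_s3.trans ih

theorem le_of_mem (h : IsPath u z γ) (hx : x ∈ γ) : u ≤ x ∧ x ≤ z := by
  induction h with
  | single => obtain rfl := List.mem_singleton.mp hx; exact ⟨le_rfl, le_rfl⟩
  | cons hst h ih =>
    rcases List.mem_cons.mp hx with rfl | hx
    · exact ⟨le_rfl, hst.le_s3.trans h.le_s3⟩
    · exact ⟨hst.le_s3.trans (ih hx).1, (ih hx).2⟩

theorem map_add (c : Site) (h : IsPath u z γ) : IsPath (u + c) (z + c) (γ.map (· + c)) := by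
  induction h with
  | single => exact single _
  | cons hst _ ih => exact cons (hst.add c) ih

theorem append_tail (hp : IsPath u w p) (hs : IsPath w z s) : IsPath u z (p ++ s.tail) := by
  induction hp with
  | single => obtain ⟨t, rfl⟩ := hs.exists_eq_cons; simpa using hs
  | cons hst _ ih => exact cons hst (ih hs)

theorem exists_eq_append_tail (h : IsPath u z γ) (hx : x ∈ γ) :
    ∃ p s, γ = p ++ s.tail ∧ IsPath u x p ∧ IsPath x z s := by
  induction h with
  | single => obtain rfl := List.mem_singleton.mp hx; exact ⟨_, _, rfl, single _, single _⟩
  | cons hst h ih =>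
    rcases List.mem_cons.mp hx with rfl | hx
    · exact ⟨_, _, rfl, single _, cons hst h⟩
    · obtain ⟨p, s, rfl, hp, hs⟩ := ih hx
      exact ⟨_, s, rfl, cons hst hp, hs⟩

theorem exists_isStep_mem (h : IsPath u z γ) (hx : x ∈ γ) (hxu : x ≠ u) :
    ∃ w ∈ γ, IsStep w x := by
  induction h with
  | single => exact absurd (List.mem_singleton.mp hx) hxu
  | @cons u v _ γ hst h ih =>
    have hxγ : x ∈ γ := (List.mem_cons.mp hx).resolve_left hxu
    obtain ⟨t, rfl⟩ := h.exists_eq_cons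
    by_cases hxv : x = v
    · exact ⟨u, List.mem_cons_self, hxv ▸ hst⟩
    · obtain ⟨w, hw, hwx⟩ := ih hxγ hxv
      exact ⟨w, List.mem_cons_of_mem _ hw, hwx⟩

theorem eq_of_below {γ' : List Site} (h : IsPath u z γ) (h' : IsPath u z γ')
    (hb : Below γ γ') (hb' : Below γ' γ) : γ = γ' := by
  induction h generalizing γ' with
  | single =>
    cases h' with
    | single => rfl
    | cons hst h' => exact absurd (hst.lt.trans_le h'.le_s3) (lt_irrefl _)
  | cons hst h ih =>
    cases h' with
    | single => exact absurd (hst.lt.trans_le h.le_s3) (lt_irrefl _)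
    | cons hst' h' =>
      rw [below_cons_cons] at hb hb'
      obtain ⟨t, rfl⟩ := h.exists_eq_cons
      obtain ⟨t', rfl⟩ := h'.exists_eq_cons
      obtain rfl := hst.eq_of_snd_eq hst' (le_antisymm (below_cons_cons.mp hb.2).1
        (below_cons_cons.mp hb'.2).1)
      rw [ih h' hb.2 hb'.2]

end IsPath

theorem isPathTo_iff_isPath {z : Site} {γ : List Site} : IsPathTo z γ ↔ IsPath 0 z γ :=
  ⟨fun ⟨hhead, hlast, hchain⟩ => .of_isChain hhead hlast hchain,
    fun h => ⟨h.head?, h.getLast?, h.isChain⟩⟩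

theorem plen_append_tail (ω : Site → ℝ) (p : List Site) {s : List Site} {w z : Site}
    (hs : IsPath w z s) : plen ω (p ++ s.tail) + ω w = plen ω p + plen ω s := by
  obtain ⟨t, rfl⟩ := hs.exists_eq_cons
  simp only [plen, List.tail_cons, List.map_append, List.sum_append, List.map_cons, List.sum_cons]
  ring

theorem plen_map_add (ω : Site → ℝ) (c : Site) (γ : List Site) :
    plen ω (γ.map (· + c)) = plen (fun x => ω (c + x)) γ := by
  simp [plen, Function.comp_def, add_comm]

section LowOptimal

variable {ω : Site → ℝ} {w x z : Site} {γ γ' p s ρ σ : List Site}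

theorem IsLowOptimal.eq (h : IsLowOptimal ω z γ) (h' : IsLowOptimal ω z γ') : γ = γ' :=
  (isPathTo_iff_isPath.mp h.1.1).eq_of_below (isPathTo_iff_isPath.mp h'.1.1)
    (h.2 γ' h'.1) (h'.2 γ h.1)

theorem lowOpt_eq (h : IsLowOptimal ω z γ) : lowOpt ω z = γ := by
  have hex : ∃ γ, IsLowOptimal ω z γ := ⟨γ, h⟩
  rw [lowOpt, dif_pos hex]
  exact hex.choose_spec.eq h

theorem isLowOptimal_lowOpt_of_mem (hx : x ∈ lowOpt ω z) :
    IsLowOptimal ω z (lowOpt ω z) := by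
  obtain ⟨γ, hγ⟩ : ∃ γ, IsLowOptimal ω z γ := by
    by_contra hex
    simp [lowOpt, hex] at hx
  rwa [lowOpt_eq hγ]

theorem le_of_mem_lowOpt (hx : x ∈ lowOpt ω z) : 0 ≤ x ∧ x ≤ z :=
  (isPathTo_iff_isPath.mp (isLowOptimal_lowOpt_of_mem hx).1.1).le_of_mem hx

theorem IsOptimal.plen_add_le (hγ : IsOptimal ω z (p ++ s.tail)) (hs : IsPath w z s)
    (hρ : IsPath 0 w ρ) (hσ : IsPath w z σ) :
    plen ω ρ + plen ω σ ≤ plen ω p + plen ω s := by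
  have := hγ.2 _ (isPathTo_iff_isPath.mpr (hρ.append_tail hσ))
  linarith [plen_append_tail ω p hs, plen_append_tail ω ρ hσ]

theorem IsLowOptimal.below_of_plen_add_le (hγ : IsLowOptimal ω z (p ++ s.tail))
    (hp : IsPath 0 w p) (hs : IsPath w z s) (hρ : IsPath 0 w ρ) (hσ : IsPath w z σ)
    (hle : plen ω p + plen ω s ≤ plen ω ρ + plen ω σ) : Below p ρ ∧ Below s σ := by
  have hopt : IsOptimal ω z (ρ ++ σ.tail) :=
    ⟨isPathTo_iff_isPath.mpr (hρ.append_tail hσ), fun γ' hγ' => by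
      linarith [hγ.1.2 γ' hγ', plen_append_tail ω p hs, plen_append_tail ω ρ hσ]⟩
  have hlen : p.length = ρ.length := by
    have := hp.length_eq
    have := hρ.length_eq
    omega
  obtain ⟨hbp, hbs⟩ := (below_append hlen).mp (hγ.2 _ hopt)
  obtain ⟨t, rfl⟩ := hs.exists_eq_cons
  obtain ⟨t', rfl⟩ := hσ.exists_eq_cons
  exact ⟨hbp, below_cons_cons.mpr ⟨le_rfl, hbs⟩⟩

theorem IsLowOptimal.of_append_tail_left (hγ : IsLowOptimal ω z (p ++ s.tail))
    (hp : IsPath 0 w p) (hs : IsPath w z s) : IsLowOptimal ω w p := by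
  have hopt : IsOptimal ω w p := ⟨isPathTo_iff_isPath.mpr hp, fun ρ hρ => by
    linarith [hγ.1.plen_add_le hs (isPathTo_iff_isPath.mp hρ) hs]⟩
  refine ⟨hopt, fun ρ hρ => ?_⟩
  exact (hγ.below_of_plen_add_le hp hs (isPathTo_iff_isPath.mp hρ.1) hs
    (by linarith [hρ.2 p hopt.1])).1

theorem IsLowOptimal.map_sub_of_append_tail (hγ : IsLowOptimal ω z (p ++ s.tail))
    (hp : IsPath 0 w p) (hs : IsPath w z s) :
    IsLowOptimal (fun x => ω (w + x)) (z - w) (s.map (· - w)) := by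
  have hlift {ρ : List Site} (hρ : IsPathTo (z - w) ρ) : IsPath w z (ρ.map (· + w)) := by
    simpa using (isPathTo_iff_isPath.mp hρ).map_add w
  have hσ : IsPath 0 (z - w) (s.map (· - w)) := by
    simpa [sub_eq_add_neg] using hs.map_add (-w)
  have hplen : plen (fun x => ω (w + x)) (s.map (· - w)) = plen ω s := by
    rw [← plen_map_add, List.map_map]
    simp [Function.comp_def]
  have hopt : IsOptimal (fun x => ω (w + x)) (z - w) (s.map (· - w)) :=
    ⟨isPathTo_iff_isPath.mpr hσ, fun ρ hρ => by
      rw [hplen, ← plen_map_add]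
      linarith [hγ.1.plen_add_le hs hp (hlift hρ)]⟩
  refine ⟨hopt, fun ρ hρ => ?_⟩
  have hbelow := (hγ.below_of_plen_add_le hp hs hp (hlift hρ.1)
    (by rw [plen_map_add]; linarith [hρ.2 _ hopt.1])).2
  rw [← below_map_add w, List.map_map]
  simpa [Function.comp_def] using hbelow

end LowOptimal

theorem mem_lowOpt_shift {ω : Site → ℝ} {a z : Site} (h₁ : a ∈ lowOpt ω (a + (1, 0)))
    (h₂ : a ∈ lowOpt ω (a + (0, 1))) (h : a + (1, 1) ∈ lowOpt ω z) :
    ((1, 1) : Site) ∈ lowOpt (fun x => ω (a + x)) (z - a) := by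
  have hγ := isLowOptimal_lowOpt_of_mem h
  generalize lowOpt ω z = γ at hγ h
  have hpath : IsPath 0 z γ := isPathTo_iff_isPath.mp hγ.1.1
  have ha : 0 ≤ a := (le_of_mem_lowOpt h₁).1
  have hne : a + (1, 1) ≠ 0 :=
    (ha.trans_lt (lt_add_of_pos_right a (by simp [Prod.lt_iff]))).ne'
  obtain ⟨w, hw, hwa⟩ := hpath.exists_isStep_mem h hne
  have haw : a ∈ lowOpt ω w := by
    rcases hwa with hwa | hwa
    · obtain rfl : w = a + (0, 1) := by
        ext <;> simp only [Prod.ext_iff, Prod.fst_add, Prod.snd_add] at hwa ⊢ <;> linarith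
      exact h₂
    · obtain rfl : w = a + (1, 0) := by
        ext <;> simp only [Prod.ext_iff, Prod.fst_add, Prod.snd_add] at hwa ⊢ <;> linarith
      exact h₁
  have haγ : a ∈ γ := by
    obtain ⟨p, s, rfl, hp, hs⟩ := hpath.exists_eq_append_tail hw
    rw [lowOpt_eq (hγ.of_append_tail_left hp hs)] at haw
    exact List.mem_append_left _ haw
  obtain ⟨p, s, rfl, hp, hs⟩ := hpath.exists_eq_append_tail haγ
  rw [lowOpt_eq (hγ.map_sub_of_append_tail hp hs)]
  have hs₁₁ : a + (1, 1) ∈ s := by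
    rcases List.mem_append.mp h with h | h
    · exact absurd (hp.le_of_mem h).2 (by simp [Prod.le_def])
    · exact List.mem_of_mem_tail h
  exact List.mem_map.mpr ⟨_, hs₁₁, add_sub_cancel_left a _⟩

theorem image_treeV_subset {ω : Site → ℝ} {a : Site} (h₁ : a ∈ lowOpt ω (a + (1, 0)))
    (h₂ : a ∈ lowOpt ω (a + (0, 1))) :
    (· - (a + (1, 1))) '' treeV ω (a + (1, 1))
      ⊆ (· - ((1, 1) : Site)) '' treeV (fun x => ω (a + x)) (1, 1) := by
  rintro _ ⟨z, ⟨-, hz⟩, rfl⟩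
  have h₁₁ := mem_lowOpt_shift h₁ h₂ hz
  have hpos : 0 ≤ z - a := (le_of_mem_lowOpt h₁₁).1.trans (le_of_mem_lowOpt h₁₁).2
  exact ⟨z - a, ⟨Prod.le_def.mp hpos, h₁₁⟩, sub_sub z a (1, 1)⟩

theorem GrowthProperty.subtree_shift_mem {A : Set LPPTree} (hA : GrowthProperty A) {a : Site}
    {ω : CfgNN} (hω : ω ∈ OmegaSup a) (hT : subtree (toCfg ω) (a + (1, 1)) ∈ A) :
    subtree (toCfg (shift a ω)) (1, 1) ∈ A :=
  hA _ hT _ ⟨_, _, fun s => (shift a ω s).coe_nonneg, by simp [posQuad], rfl⟩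
    (image_treeV_subset hω.1 hω.2)

theorem stochastic_domination_general (ℙ : Measure CfgNN)
    (hinv : ∀ a : Site, ℙ.map (shift a) = ℙ)
    (a : Site)
    (A : Set LPPTree) (hA : GrowthProperty A) :
    ℙ ({ω : CfgNN | subtree (toCfg ω) (a + (1, 1)) ∈ A} ∩ OmegaSup a)
      ≤ ℙ ({ω : CfgNN | subtree (toCfg ω) ((1, 1) : Site) ∈ A} ∩ (shift a '' OmegaSup a)) := by
  have hshift : Measurable (shift a) := measurable_pi_lambda _ fun z => measurable_pi_apply _
  calc ℙ ({ω : CfgNN | subtree (toCfg ω) (a + (1, 1)) ∈ A} ∩ OmegaSup a)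
      ≤ ℙ (shift a ⁻¹' ({ω | subtree (toCfg ω) (1, 1) ∈ A} ∩ shift a '' OmegaSup a)) :=
        measure_mono fun ω ⟨hT, hω⟩ => ⟨hA.subtree_shift_mem hω hT, ω, hω, rfl⟩
    _ ≤ ℙ.map (shift a) ({ω | subtree (toCfg ω) (1, 1) ∈ A} ∩ shift a '' OmegaSup a) :=
        Measure.le_map_apply hshift.aemeasurable _
    _ = ℙ ({ω | subtree (toCfg ω) (1, 1) ∈ A} ∩ shift a '' OmegaSup a) := by rw [hinv a]

/-- Theorem 2, first part: for a translation-invariant probability measure `ℙ` and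
`A ⊆ 𝕋` satisfying the growth property,
`ℙ(T_{a+(1,1)} ∈ A, Ω^a) ≤ ℙ(T_{(1,1)} ∈ A, τ_a(Ω^a))`. -/
theorem stochastic_domination (ℙ : Measure CfgNN) [IsProbabilityMeasure ℙ]
    (hinv : ∀ a : Site, ℙ.map (shift a) = ℙ)
    (a : Site) (ha : a ∈ posQuad)
    (A : Set LPPTree) (hA_sub : A ⊆ TreeSet) (hA : GrowthProperty A)
    (hmeas : ∀ z ∈ posQuad, MeasurableSet {ω : CfgNN | subtree (toCfg ω) z ∈ A}) :
    ℙ ({ω : CfgNN | subtree (toCfg ω) (a + (1, 1)) ∈ A} ∩ OmegaSup a)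
      ≤ ℙ ({ω : CfgNN | subtree (toCfg ω) ((1, 1) : Site) ∈ A} ∩ (shift a '' OmegaSup a)) :=
  stochastic_domination_general ℙ hinv a A hA
end
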